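/- For the two-state chain with r = 1 - p - q ≠ 0, for all integers k ≥ 1 and i ≥ 0, the coefficient of t^i in the power-series expansion of G_1(t,k) equals c_i(k) = q (1-p)^{k-1-i} Σ_{j=0}^{min(i,k)} C(k,j) C(k+i-j, i-j) (1 - (j/k) p) (1-p)^{i-j} (1-q)^{i-j} (-r)^j, where (1-p)^{k-1-i} is the real power zpow with possibly negative integer exponent; equivalently g_1(i+k, k) = c_i(k). -/

import Mathlib

open Matrix Finset

/-- Transition matrix of the two-state chain with parameters `p`, `q`. -/
noncomputable def twoStateP (p q : ℝ) : Matrix (Fin 2) (Fin 2) ℝ :=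
  !![1 - p, p; q, 1 - q]

/-- `g2 p q i n k` is the probability that the two-state chain started at `i`
spends exactly `k` of the times `1,…,n` in state `0`. -/
noncomputable def g2 (p q : ℝ) (i : Fin 2) (n k : ℕ) : ℝ :=
  ∑ x ∈ Finset.univ.filter
      (fun x : Fin (n + 1) → Fin 2 => x 0 = i ∧
        (Finset.univ.filter (fun m : Fin n => x m.succ = 0)).card = k),
    ∏ m : Fin n, twoStateP p q (x m.castSucc) (x m.succ)

lemma prod_cons (p q : ℝ) (n : ℕ) (a : Fin 2) (y : Fin (n+1) → Fin 2) :
    (∏ m : Fin (n+1), twoStateP p q ((Fin.cons a y : Fin (n+2) → Fin 2) m.castSucc)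
        ((Fin.cons a y : Fin (n+2) → Fin 2) m.succ))
      = twoStateP p q a (y 0) * ∏ m : Fin n, twoStateP p q (y m.castSucc) (y m.succ) := by
  rw [Fin.prod_univ_succ]
  simp [← Fin.succ_castSucc, Fin.cons_succ]

lemma count_cons (n : ℕ) (a : Fin 2) (y : Fin (n+1) → Fin 2) :
    (univ.filter fun m : Fin (n+1) => (Fin.cons a y : Fin (n+2) → Fin 2) m.succ = 0).card
      = (if y 0 = 0 then 1 else 0) + (univ.filter fun m : Fin n => y m.succ = 0).card := by
  simp only [Fin.cons_succ, Finset.card_filter]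
  rw [Fin.sum_univ_succ]

lemma g2_expand (p q : ℝ) (s : Fin 2) (n k : ℕ) :
    g2 p q s (n+1) k
      = ∑ y : Fin (n+1) → Fin 2,
          if ((if y 0 = 0 then 1 else 0) + (univ.filter fun m : Fin n => y m.succ = 0).card = k)
          then twoStateP p q s (y 0) * ∏ m : Fin n, twoStateP p q (y m.castSucc) (y m.succ)
          else 0 := by
  rw [g2, Finset.sum_filter]
  rw [← Equiv.sum_comp (Fin.consEquiv (fun _ => Fin 2))]
  rw [Fintype.sum_prod_type]
  rw [Fin.sum_univ_two]
  simp only [Fin.consEquiv_apply, Fin.cons_zero, prod_cons, count_cons]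
  fin_cases s <;> simp

lemma g2_step_succ (p q : ℝ) (s : Fin 2) (n k : ℕ) :
    g2 p q s (n+1) (k+1)
      = twoStateP p q s 0 * g2 p q 0 n k + twoStateP p q s 1 * g2 p q 1 n (k+1) := by
  rw [g2_expand, g2, g2, Finset.sum_filter, Finset.sum_filter, Finset.mul_sum, Finset.mul_sum,
    ← Finset.sum_add_distrib]
  apply Finset.sum_congr rfl
  intro y _
  rcases (by omega : y 0 = 0 ∨ y 0 = 1) with h | h <;> simp [h]
  have hc : (1 + (univ.filter fun m : Fin n => y m.succ = 0).card = k + 1)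
      ↔ (univ.filter fun m : Fin n => y m.succ = 0).card = k := by omega
  simp only [hc]

lemma g2_step_zero (p q : ℝ) (s : Fin 2) (n : ℕ) :
    g2 p q s (n+1) 0 = twoStateP p q s 1 * g2 p q 1 n 0 := by
  rw [g2_expand, g2, Finset.sum_filter, Finset.mul_sum]
  apply Finset.sum_congr rfl
  intro y _
  rcases (by omega : y 0 = 0 ∨ y 0 = 1) with h | h <;> simp [h]

lemma g2_init (p q : ℝ) (s : Fin 2) : g2 p q s 0 0 = 1 := by
  rw [g2, Finset.sum_filter]
  rw [← Equiv.sum_comp (Equiv.funUnique (Fin 1) (Fin 2)).symm]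
  rw [Fin.sum_univ_two]
  fin_cases s <;> simp

lemma g2_gt (p q : ℝ) (s : Fin 2) (n k : ℕ) (h : n < k) : g2 p q s n k = 0 := by
  rw [g2]
  apply Finset.sum_eq_zero
  intro x hx
  simp only [Finset.mem_filter] at hx
  have := Finset.card_filter_le (univ : Finset (Fin n)) (fun m => x m.succ = 0)
  simp at this
  omega

lemma tsP00 (p q : ℝ) : twoStateP p q 0 0 = 1 - p := by simp [twoStateP]
lemma tsP01 (p q : ℝ) : twoStateP p q 0 1 = p := by simp [twoStateP]
lemma tsP10 (p q : ℝ) : twoStateP p q 1 0 = q := by simp [twoStateP]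
lemma tsP11 (p q : ℝ) : twoStateP p q 1 1 = 1 - q := by simp [twoStateP]

lemma g2_one_zero (p q : ℝ) (n : ℕ) : g2 p q 1 n 0 = (1-q)^n := by
  induction n with
  | zero => simp [g2_init]
  | succ n ih => rw [g2_step_zero, tsP11, ih]; ring

lemma g2_zero_diag (p q : ℝ) (n : ℕ) : g2 p q 0 n n = (1-p)^n := by
  induction n with
  | zero => simp [g2_init]
  | succ n ih =>
      rw [g2_step_succ, tsP00, tsP01, ih, g2_gt p q 1 n (n+1) (by omega)]
      ring

lemma g2_zero_zero (p q : ℝ) (n : ℕ) : g2 p q 0 (n+1) 0 = p * (1-q)^n := by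
  rw [g2_step_zero, tsP01, g2_one_zero]

lemma g2_one_diag (p q : ℝ) (k : ℕ) : g2 p q 1 (k+1) (k+1) = q * (1-p)^k := by
  rw [g2_step_succ, tsP10, tsP11, g2_zero_diag, g2_gt p q 1 k (k+1) (by omega)]
  ring

noncomputable def dS (p : ℝ) (k j : ℕ) : ℝ :=
  (k.choose j : ℝ) - p * (if j = 0 then 0 else ((k-1).choose (j-1) : ℝ))

noncomputable def SS (p q r : ℝ) (i k : ℕ) : ℝ :=
  ∑ j ∈ Finset.range (i+1),
    dS p k j * ((k + (i-j)).choose (i-j) : ℝ) * ((1-p)*(1-q))^(i-j) * (-r)^j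

lemma dS_zero (p : ℝ) (k : ℕ) : dS p k 0 = 1 := by simp [dS]

lemma dS_pascal (p : ℝ) (k j : ℕ) :
    dS p (k+2) (j+1) = dS p (k+1) (j+1) + dS p (k+1) j := by
  rcases j with _ | j
  · simp [dS, Nat.choose]; ring
  · simp only [dS, Nat.add_sub_cancel, if_neg (Nat.succ_ne_zero _), Nat.succ_sub_one]
    have h1 : (k+2).choose (j+2) = (k+1).choose (j+1) + (k+1).choose (j+2) :=
      Nat.choose_succ_succ' (k+1) (j+1)
    have h2 : (k+1).choose (j+1) = k.choose j + k.choose (j+1) :=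
      Nat.choose_succ_succ' k j
    push_cast [h1, h2]
    ring

lemma SS_split (p q r : ℝ) (i c : ℕ) :
    SS p q r (i+1) (c+1)
      = ((1-p)*(1-q)) * SS p q r i (c+1)
        + ∑ j ∈ Finset.range (i+2),
            dS p (c+1) j * ((c + (i+1-j)).choose (i+1-j) : ℝ) * ((1-p)*(1-q))^(i+1-j) * (-r)^j := by
  rw [SS, SS, Finset.mul_sum, Finset.sum_range_succ, Finset.sum_range_succ (n := i+1)]
  have hlast : dS p (c+1) (i+1) * (((c+1) + (i+1-(i+1))).choose (i+1-(i+1)) : ℝ)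
        * ((1-p)*(1-q))^(i+1-(i+1)) * (-r)^(i+1)
      = dS p (c+1) (i+1) * ((c + (i+1-(i+1))).choose (i+1-(i+1)) : ℝ)
        * ((1-p)*(1-q))^(i+1-(i+1)) * (-r)^(i+1) := by
    simp
  rw [hlast]
  have hterm : ∀ j ∈ Finset.range (i+1),
      dS p (c+1) j * (((c+1) + (i+1-j)).choose (i+1-j) : ℝ) * ((1-p)*(1-q))^(i+1-j) * (-r)^j
        = ((1-p)*(1-q)) * (dS p (c+1) j * (((c+1) + (i-j)).choose (i-j) : ℝ)
            * ((1-p)*(1-q))^(i-j) * (-r)^j)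
          + dS p (c+1) j * ((c + (i+1-j)).choose (i+1-j) : ℝ)
            * ((1-p)*(1-q))^(i+1-j) * (-r)^j := by
    intro j hj
    have hji : j ≤ i := by simpa [Nat.lt_succ_iff] using hj
    rw [show i+1-j = (i-j)+1 from by omega]
    generalize i - j = m
    have hch : ((c+1) + (m+1)).choose (m+1) = ((c+1)+m).choose m + (c + (m+1)).choose (m+1) := by
      rw [show (c+1)+(m+1) = (c+(m+1))+1 from by ring, show (c+1)+m = c+(m+1) from by ring]
      exact Nat.choose_succ_succ' (c+(m+1)) m
    push_cast [hch]
    ring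
  rw [Finset.sum_congr rfl hterm, Finset.sum_add_distrib]
  ring

lemma SS_split2 (p q r : ℝ) (i k : ℕ) :
    (∑ j ∈ Finset.range (i+2),
        dS p (k+2) j * (((k+1) + (i+1-j)).choose (i+1-j) : ℝ) * ((1-p)*(1-q))^(i+1-j) * (-r)^j)
      = SS p q r (i+1) (k+1) - r * SS p q r i (k+1) := by
  rw [SS, SS, Finset.mul_sum]
  rw [Finset.sum_range_succ' _ (i+1), Finset.sum_range_succ' _ (i+1)]
  have hterm : ∀ j ∈ Finset.range (i+1),
      dS p (k+2) (j+1) * (((k+1) + (i+1-(j+1))).choose (i+1-(j+1)) : ℝ)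
          * ((1-p)*(1-q))^(i+1-(j+1)) * (-r)^(j+1)
        = dS p (k+1) (j+1) * (((k+1) + (i+1-(j+1))).choose (i+1-(j+1)) : ℝ)
            * ((1-p)*(1-q))^(i+1-(j+1)) * (-r)^(j+1)
          + -(r * (dS p (k+1) j * (((k+1) + (i-j)).choose (i-j) : ℝ)
            * ((1-p)*(1-q))^(i-j) * (-r)^j)) := by
    intro j hj
    rw [dS_pascal, show i+1-(j+1) = i-j from by omega]
    ring
  rw [Finset.sum_congr rfl hterm, Finset.sum_add_distrib]
  have hz : dS p (k+2) 0 * (((k+1) + (i+1-0)).choose (i+1-0) : ℝ)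
        * ((1-p)*(1-q))^(i+1-0) * (-r)^0
      = dS p (k+1) 0 * (((k+1) + (i+1-0)).choose (i+1-0) : ℝ)
        * ((1-p)*(1-q))^(i+1-0) * (-r)^0 := by
    rw [dS_zero, dS_zero]
  rw [hz]
  rw [Finset.sum_neg_distrib]
  ring

lemma SS_rec (p q r : ℝ) (i k : ℕ) :
    SS p q r (i+1) (k+2)
      = ((1-p)*(1-q)) * SS p q r i (k+2) + SS p q r (i+1) (k+1) - r * SS p q r i (k+1) := by
  rw [SS_split p q r i (k+1), SS_split2]
  ring

lemma SS_col1 (p q r : ℝ) (hr : r = 1 - p - q) (i : ℕ) :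
    SS p q r (i+1) 1 = ((1-p)*(1-q)) * SS p q r i 1 + p * (1-p)^(i+1) * (1-q)^i := by
  rw [SS_split p q r i 0]
  congr 1
  have hzero : ∀ j ∈ Finset.range (i+2), j ∉ Finset.range 2 →
      dS p 1 j * ((0 + (i+1-j)).choose (i+1-j) : ℝ) * ((1-p)*(1-q))^(i+1-j) * (-r)^j = 0 := by
    intro j _ hj2
    have hj : 2 ≤ j := by simp [Nat.lt_succ_iff] at hj2; omega
    have h1 : (1:ℕ).choose j = 0 := Nat.choose_eq_zero_of_lt (by omega)
    have h2 : (0:ℕ).choose (j-1) = 0 := Nat.choose_eq_zero_of_lt (by omega)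
    simp [dS, h1, h2, if_neg (by omega : ¬ j = 0)]
  rw [← Finset.sum_subset (by intro x hx; simp at hx ⊢; omega :
        Finset.range 2 ⊆ Finset.range (i+2)) hzero]
  rw [Finset.sum_range_succ, Finset.sum_range_one]
  have e0 : dS p 1 0 = 1 := dS_zero p 1
  have e1 : dS p 1 1 = 1 - p := by simp [dS]
  rw [e0, e1, show i+1-1 = i from by omega]
  simp only [Nat.sub_zero, Nat.zero_add, Nat.choose_self, Nat.cast_one, pow_zero, pow_one,
    one_mul, mul_one]
  rw [mul_pow, mul_pow, hr]
  ring

lemma g2_CR (p q r : ℝ) (hr : r = 1 - p - q) (i k : ℕ) :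
    g2 p q 1 (i+k+3) (k+2)
      = (1-q) * g2 p q 1 (i+k+2) (k+2) + (1-p) * g2 p q 1 (i+k+2) (k+1)
        - r * g2 p q 1 (i+k+1) (k+1) := by
  have h1 := g2_step_succ p q 1 (i+k+2) (k+1)
  have h2 := g2_step_succ p q 0 (i+k+1) k
  have h3 := g2_step_succ p q 1 (i+k+1) k
  rw [tsP10, tsP11] at h1 h3
  rw [tsP00, tsP01] at h2
  rw [show i+k+2+1 = i+k+3 from by omega, show k+1+1 = k+2 from by omega] at h1
  rw [show i+k+1+1 = i+k+2 from by omega] at h2 h3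
  rw [hr]
  linear_combination h1 + q * h2 - (1-p) * h3

lemma g2_formula (p q r : ℝ) (hp : 1 - p ≠ 0) (hr : r = 1 - p - q) :
    ∀ i k : ℕ, g2 p q 1 (i + k + 1) (k+1) = q * (1-p)^((k:ℤ) - (i:ℤ)) * SS p q r i (k+1) := by
  intro i
  induction i with
  | zero =>
      intro k
      rw [show (0:ℕ)+k+1 = k+1 from by omega, g2_one_diag]
      have hSS : SS p q r 0 (k+1) = 1 := by simp [SS, dS]
      rw [hSS, show (k:ℤ) - ((0:ℕ):ℤ) = ((k:ℕ):ℤ) from by push_cast; ring, zpow_natCast]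
      ring
  | succ i IH1 =>
      intro k
      induction k with
      | zero =>
          have hstep := g2_step_succ p q 1 (i+1) 0
          rw [tsP10, tsP11, g2_zero_zero] at hstep
          have hIH := IH1 0
          rw [show i+0+1 = i+1 from by omega] at hIH
          rw [hIH] at hstep
          rw [show i+1+0+1 = i+1+1 from by omega, hstep]
          rw [show ((0:ℕ):ℤ) - ((i+1:ℕ):ℤ) = (0:ℤ) - (i:ℤ) - 1 from by push_cast; ring]
          rw [SS_col1 p q r hr i]
          have e2 : (1-p)^((0:ℤ) - (i:ℤ) - 1) * (1-p)^(i+1) = 1 := by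
            rw [← zpow_natCast (1-p) (i+1), ← zpow_add₀ hp]
            norm_num
          have e1 : (1-p)^(((0:ℕ):ℤ) - (i:ℤ)) = (1-p)^((0:ℤ) - (i:ℤ) - 1) * (1-p) := by
            rw [← zpow_add_one₀ hp]
            norm_num
          rw [e1]
          linear_combination (-(q*p*(1-q)^i)) * e2
      | succ k IH2 =>
          have hCR := g2_CR p q r hr i k
          have hA := IH1 (k+1)
          have hB := IH2
          have hC := IH1 k
          simp only [show i+(k+1)+1 = i+k+2 from by omega] at hA
          simp only [show (i+1)+k+1 = i+k+2 from by omega] at hB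
          rw [hA, hB, hC] at hCR
          rw [show (i+1)+(k+1)+1 = i+k+3 from by omega, hCR]
          simp only [show k+1+1 = k+2 from by omega]
          have hrec := SS_rec p q r i k
          have f0 : (1-p)^(((k+1:ℕ):ℤ) - ((i+1:ℕ):ℤ)) = (1-p)^((k:ℤ) - (i:ℤ) - 1) * (1-p) := by
            rw [show ((k+1:ℕ):ℤ) - ((i+1:ℕ):ℤ) = ((k:ℤ) - (i:ℤ) - 1) + 1 from by push_cast; ring,
              zpow_add_one₀ hp]
          have f1 : (1-p)^(((k+1:ℕ):ℤ) - ((i:ℕ):ℤ)) = (1-p)^((k:ℤ) - (i:ℤ) - 1) * ((1-p)*(1-p)) := by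
            rw [show ((k+1:ℕ):ℤ) - ((i:ℕ):ℤ) = (((k:ℤ) - (i:ℤ) - 1) + 1) + 1 from by push_cast; ring,
              zpow_add_one₀ hp, zpow_add_one₀ hp]
            ring
          have f2 : (1-p)^(((k:ℕ):ℤ) - ((i+1:ℕ):ℤ)) = (1-p)^((k:ℤ) - (i:ℤ) - 1) := by
            rw [show ((k:ℕ):ℤ) - ((i+1:ℕ):ℤ) = (k:ℤ) - (i:ℤ) - 1 from by push_cast; ring]
          have f3 : (1-p)^(((k:ℕ):ℤ) - ((i:ℕ):ℤ)) = (1-p)^((k:ℤ) - (i:ℤ) - 1) * (1-p) := by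
            rw [show ((k:ℕ):ℤ) - ((i:ℕ):ℤ) = ((k:ℤ) - (i:ℤ) - 1) + 1 from by push_cast; ring,
              zpow_add_one₀ hp]
            norm_num
          rw [f0, f1, f2, f3]
          linear_combination (-(q * (1-p)^((k:ℤ) - (i:ℤ) - 1) * (1-p))) * hrec

lemma rhs_eq_SS (p q r : ℝ) (i k : ℕ) (hk : 1 ≤ k) :
    (∑ j ∈ Finset.range (min i k + 1),
      (k.choose j : ℝ) * ((k + i - j).choose (i - j) : ℝ) *
        (1 - ((j : ℝ) / (k : ℝ)) * p) *
        (1 - p) ^ (i - j) * (1 - q) ^ (i - j) * (-r) ^ j)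
      = SS p q r i k := by
  rw [SS]
  rw [← Finset.sum_subset (by intro x hx; simp only [Finset.mem_range] at hx ⊢; omega :
        Finset.range (min i k + 1) ⊆ Finset.range (i+1))
      (by
        intro j hj hj2
        simp only [Finset.mem_range] at hj hj2
        have hjk : k < j := by omega
        have h1 : k.choose j = 0 := Nat.choose_eq_zero_of_lt hjk
        have h2 : (k-1).choose (j-1) = 0 := Nat.choose_eq_zero_of_lt (by omega)
        have hd : dS p k j = 0 := by
          rw [dS, h1, h2]
          simp [if_neg (by omega : ¬ j = 0)]
        rw [hd]
        ring)]
  apply Finset.sum_congr rfl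
  intro j hj
  simp only [Finset.mem_range] at hj
  have hji : j ≤ i := by omega
  have hjk : j ≤ k := by omega
  rw [show k + i - j = k + (i-j) from by omega, mul_pow]
  have hmain : (k.choose j : ℝ) * (1 - ((j : ℝ) / (k : ℝ)) * p) = dS p k j := by
    rcases j with _ | j'
    · simp [dS]
    · have hch : k * ((k-1).choose j') = (k.choose (j'+1)) * (j'+1) := by
        have := Nat.add_one_mul_choose_eq (k-1) j'
        rwa [show k-1+1 = k from by omega] at this
      have hcast : (k:ℝ) * ((k-1).choose j' : ℝ) = (k.choose (j'+1) : ℝ) * ((j':ℝ)+1) := by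
        exact_mod_cast hch
      rw [dS, if_neg (Nat.succ_ne_zero j'), Nat.succ_sub_one]
      have hk0 : (k:ℝ) ≠ 0 := Nat.cast_ne_zero.mpr (by omega)
      field_simp
      push_cast
      linear_combination p * hcast
  linear_combination (((k + (i-j)).choose (i-j) : ℝ) * ((1-p)^(i-j)*(1-q)^(i-j)) * (-r)^j) * hmain


theorem stmt18 (p q : ℝ) (hp : p ∈ Set.Ioo (0 : ℝ) 1) (hq : q ∈ Set.Ioo (0 : ℝ) 1)
    (r : ℝ) (hr : r = 1 - p - q) (hr0 : r ≠ 0) (k : ℕ) (hk : 1 ≤ k) (i : ℕ) :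
    g2 p q 1 (i + k) k =
      q * (1 - p) ^ ((k : ℤ) - 1 - (i : ℤ)) *
        ∑ j ∈ Finset.range (min i k + 1),
          (k.choose j : ℝ) * ((k + i - j).choose (i - j) : ℝ) *
            (1 - ((j : ℝ) / (k : ℝ)) * p) *
            (1 - p) ^ (i - j) * (1 - q) ^ (i - j) * (-r) ^ j := by

  obtain ⟨k', rfl⟩ : ∃ k', k = k'+1 := ⟨k-1, by omega⟩
  have hp1 : (1:ℝ) - p ≠ 0 := by
    have := hp.2
    intro h
    simp only [Set.mem_Ioo] at hp
    linarith [hp.2]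
  rw [rhs_eq_SS p q r i (k'+1) (by omega)]
  rw [show i + (k'+1) = i + k' + 1 from by omega]
  rw [g2_formula p q r hp1 hr i k']
  rw [show ((k'+1:ℕ):ℤ) - 1 - (i:ℤ) = (k':ℤ) - (i:ℤ) from by push_cast; ring]
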